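/- For every real t with 0 < t < 2, with Y_{1,s} := Ỹ_s/Y_s, S_{1,s} := S̃_s − S_s, Q₁(t) := (1/2)t(1+t/2), Q₂(t) := t/2, Q₃(t) := (1/2)t(1−t/2): (i) Y_{1,1}(t)^{1/2} + Y_{1,1}(t)^{−1/2} + 2 = S_{1,1}(t)²/(2Q₁(t)); (ii) Y_{1,2}(t) + Y_{1,2}(t)^{−1} + 2 = S_{1,2}(t)²/(2Q₂(t)); (iii) Y_{1,3}(t)^{3/2} + Y_{1,3}(t)^{−3/2} + 2 = S_{1,3}(t)²/(2Q₃(t)). (Real powers of positive reals; these are the instances s = 1, 2, 3 of Y_{1,s}^{s/2} + Y_{1,s}^{−s/2} + 2 = S_{1,s}²/(2Q_s).) -/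

import Mathlib

/-! Göttsche–Kool universal functions of a real variable `t`, with all square
roots the nonnegative real square roots.  The `t`-suffixed versions
(`gkYt`, `gkZt`, `gkSt`) are the sign-flipped functions obtained by
replacing `√t` with `−√t`. -/

noncomputable def gkY1 (t : ℝ) : ℝ := (1 + t) + Real.sqrt t * Real.sqrt (1 + 3*t/4)
noncomputable def gkYt1 (t : ℝ) : ℝ := (1 + t) - Real.sqrt t * Real.sqrt (1 + 3*t/4)
noncomputable def gkY2 (t : ℝ) : ℝ := Real.sqrt t + Real.sqrt (1 + t)
noncomputable def gkYt2 (t : ℝ) : ℝ := -Real.sqrt t + Real.sqrt (1 + t)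
noncomputable def gkY3 (t : ℝ) : ℝ := 1 + Real.sqrt t * Real.sqrt (1 - t/4)
noncomputable def gkYt3 (t : ℝ) : ℝ := 1 - Real.sqrt t * Real.sqrt (1 - t/4)
noncomputable def gkZ1 (t : ℝ) : ℝ :=
  (1 + 3*t/4 - (1/2) * Real.sqrt t * Real.sqrt (1 + 3*t/4)) / (1 + t/2)
noncomputable def gkZt1 (t : ℝ) : ℝ :=
  (1 + 3*t/4 + (1/2) * Real.sqrt t * Real.sqrt (1 + 3*t/4)) / (1 + t/2)
noncomputable def gkZ2 (t : ℝ) : ℝ := 1 + t - Real.sqrt t * Real.sqrt (1 + t)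
noncomputable def gkZt2 (t : ℝ) : ℝ := 1 + t + Real.sqrt t * Real.sqrt (1 + t)
noncomputable def gkZ3 (t : ℝ) : ℝ :=
  (1 + t/2) * ((1 - t/4)*(1 + t/2)
    - (3/2) * Real.sqrt t * Real.sqrt (1 - t/4) * (1 - t/6)) / (1 - t/2)^3
noncomputable def gkZt3 (t : ℝ) : ℝ :=
  (1 + t/2) * ((1 - t/4)*(1 + t/2)
    + (3/2) * Real.sqrt t * Real.sqrt (1 - t/4) * (1 - t/6)) / (1 - t/2)^3
noncomputable def gkS1 (t : ℝ) : ℝ := -t/2 + Real.sqrt t * Real.sqrt (1 + 3*t/4)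
noncomputable def gkSt1 (t : ℝ) : ℝ := -t/2 - Real.sqrt t * Real.sqrt (1 + 3*t/4)
noncomputable def gkS2 (t : ℝ) : ℝ := -t + Real.sqrt t * Real.sqrt (1 + t)
noncomputable def gkSt2 (t : ℝ) : ℝ := -t - Real.sqrt t * Real.sqrt (1 + t)
noncomputable def gkS3 (t : ℝ) : ℝ :=
  (-(3/2)*t*(1 - t/6) + Real.sqrt t * Real.sqrt (1 - t/4) * (1 + t/2)) / (1 - t/2)
noncomputable def gkSt3 (t : ℝ) : ℝ :=
  (-(3/2)*t*(1 - t/6) - Real.sqrt t * Real.sqrt (1 - t/4) * (1 + t/2)) / (1 - t/2)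
noncomputable def gkV2 (t : ℝ) : ℝ := (1 + t)^2
noncomputable def gkV3 (t : ℝ) : ℝ := (1 + t/2)^3 / (1 - t/2)
noncomputable def gkW1 (t : ℝ) : ℝ := (1 + t/2)⁻¹
noncomputable def gkW2 (t : ℝ) : ℝ := (Real.sqrt (1 + t))⁻¹
noncomputable def gkW3 (t : ℝ) : ℝ := 2 / (2 + t)
noncomputable def gkX1 (t : ℝ) : ℝ :=
  (1 + t/2) ^ (-(3:ℝ)/4) * (1 + 3*t/4) ^ (-(1:ℝ)/2)
noncomputable def gkX2 (t : ℝ) : ℝ := (1 + t) ^ (-(3:ℝ)/2)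
noncomputable def gkX3 (t : ℝ) : ℝ :=
  (1 - t/2) ^ ((3:ℝ)/4) * (1 - t/4) ^ (-(1:ℝ)/2) * (1 + t/2) ^ (-(4:ℝ))

/-! `Ỹ_s` and `Y_s` are conjugate under `√t ↦ −√t`, and their product is the square of a positive
rational function `r_s` of `t` (`1 + t/2`, `1`, `1 − t/2`). Hence `Y_{1,s}^{1/2} = Ỹ_s/r_s` and
`Y_{1,s}^{−1/2} = Y_s/r_s`, so the left side is `(Ỹ_s^s + Y_s^s)/r_s^s + 2`. Being symmetric in the
conjugates, this is a rational function of `t`, and so is `(S̃_s − S_s)²`, since `S̃_s − S_s` is odd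
in `√t`; the identity is then polynomial algebra. -/

lemma rpow_div_add_rpow_neg_div_of_mul_eq_sq {p q r : ℝ} (hp : 0 < p) (hr : 0 < r)
    (h : p * q = r ^ 2) (n : ℕ) :
    (p / q) ^ ((n : ℝ) / 2) + (p / q) ^ (-(n : ℝ) / 2) = (p ^ n + q ^ n) / r ^ n := by
  have hq : 0 < q := pos_of_mul_pos_right (h ▸ pow_pos hr 2) hp.le
  have hsqrt : √(p / q) = p / r := by
    rw [Real.sqrt_eq_iff_mul_self_eq_of_pos (by positivity)]
    field_simp
    linear_combination h
  have hpow : (p / q) ^ ((n : ℝ) / 2) = (p / r) ^ n := by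
    rw [Real.rpow_div_two_eq_sqrt _ (by positivity), hsqrt, Real.rpow_natCast]
  have hinv : (r / p) = q / r := by
    field_simp
    linear_combination -h
  rw [neg_div, Real.rpow_neg (by positivity), hpow, ← inv_pow, inv_div, hinv, div_pow, div_pow,
    add_div]

lemma sq_sqrt_mul_sqrt {x y : ℝ} (hx : 0 ≤ x) (hy : 0 ≤ y) : (√x * √y) ^ 2 = x * y := by
  rw [mul_pow, Real.sq_sqrt hx, Real.sq_sqrt hy]

section

variable {t : ℝ}

lemma gkYt1_mul_gkY1 (ht : 0 ≤ t) : gkYt1 t * gkY1 t = (1 + t/2) ^ 2 := by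
  unfold gkYt1 gkY1
  linear_combination -sq_sqrt_mul_sqrt ht (by linarith : 0 ≤ 1 + 3*t/4)

lemma gkY1_pos (ht : 0 ≤ t) : 0 < gkY1 t := by
  unfold gkY1
  positivity

lemma gkYt1_pos (ht : 0 ≤ t) : 0 < gkYt1 t :=
  pos_of_mul_pos_left ((gkYt1_mul_gkY1 ht).symm ▸ by positivity) (gkY1_pos ht).le

lemma gkSt1_sub_gkS1_sq (ht : 0 ≤ t) : (gkSt1 t - gkS1 t) ^ 2 = 4 * t * (1 + 3*t/4) := by
  unfold gkSt1 gkS1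
  linear_combination 4 * sq_sqrt_mul_sqrt ht (by linarith : 0 ≤ 1 + 3*t/4)

lemma gk_blowup_relation_one (ht : 0 < t) :
    (gkYt1 t / gkY1 t) ^ ((1:ℝ)/2) + (gkYt1 t / gkY1 t) ^ (-(1:ℝ)/2) + 2
      = (gkSt1 t - gkS1 t)^2 / (2 * ((1/2)*t*(1 + t/2))) := by
  have key := rpow_div_add_rpow_neg_div_of_mul_eq_sq (gkYt1_pos ht.le) (by positivity)
    (gkYt1_mul_gkY1 ht.le) 1
  push_cast at key
  rw [key, gkSt1_sub_gkS1_sq ht.le]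
  unfold gkYt1 gkY1
  field_simp
  ring

lemma gkYt2_mul_gkY2 (ht : 0 ≤ t) : gkYt2 t * gkY2 t = 1 := by
  unfold gkYt2 gkY2
  linear_combination Real.sq_sqrt (by linarith : 0 ≤ 1 + t) - Real.sq_sqrt ht

lemma gkY2_pos (ht : 0 ≤ t) : 0 < gkY2 t := by
  unfold gkY2
  positivity

lemma gkYt2_pos (ht : 0 ≤ t) : 0 < gkYt2 t :=
  pos_of_mul_pos_left ((gkYt2_mul_gkY2 ht).symm ▸ one_pos) (gkY2_pos ht).le

lemma gkSt2_sub_gkS2_sq (ht : 0 ≤ t) : (gkSt2 t - gkS2 t) ^ 2 = 4 * t * (1 + t) := by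
  unfold gkSt2 gkS2
  linear_combination 4 * sq_sqrt_mul_sqrt ht (by linarith : 0 ≤ 1 + t)

lemma gk_blowup_relation_two (ht : 0 < t) :
    (gkYt2 t / gkY2 t) + (gkYt2 t / gkY2 t)⁻¹ + 2 = (gkSt2 t - gkS2 t)^2 / (2 * (t/2)) := by
  have key := rpow_div_add_rpow_neg_div_of_mul_eq_sq (gkYt2_pos ht.le) one_pos
    (by rw [gkYt2_mul_gkY2 ht.le, one_pow]) 2
  rw [Nat.cast_ofNat, neg_div, div_self two_ne_zero, Real.rpow_one, Real.rpow_neg_one, one_pow,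
    div_one] at key
  rw [key, gkSt2_sub_gkS2_sq ht.le]
  unfold gkYt2 gkY2
  field_simp
  linear_combination 2 * Real.sq_sqrt ht.le + 2 * Real.sq_sqrt (by linarith : 0 ≤ 1 + t)

lemma gkYt3_mul_gkY3 (ht0 : 0 ≤ t) (ht4 : t ≤ 4) : gkYt3 t * gkY3 t = (1 - t/2) ^ 2 := by
  unfold gkYt3 gkY3
  linear_combination -sq_sqrt_mul_sqrt ht0 (by linarith : 0 ≤ 1 - t/4)

lemma gkY3_pos : 0 < gkY3 t := by
  unfold gkY3
  positivity

lemma gkYt3_pos (ht0 : 0 ≤ t) (ht2 : t < 2) : 0 < gkYt3 t := by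
  have h : 0 < gkYt3 t * gkY3 t := gkYt3_mul_gkY3 ht0 (by linarith) ▸ pow_pos (by linarith) 2
  exact pos_of_mul_pos_left h gkY3_pos.le

lemma gkSt3_sub_gkS3_sq (ht0 : 0 ≤ t) (ht2 : t < 2) :
    (gkSt3 t - gkS3 t) ^ 2 = 4 * t * (1 - t/4) * (1 + t/2) ^ 2 / (1 - t/2) ^ 2 := by
  -- `field_simp` rewrites `1 - t/2` as `(2 - t)/2`
  have h2t : 2 - t ≠ 0 := by linarith
  have ha := sq_sqrt_mul_sqrt ht0 (by linarith : 0 ≤ 1 - t/4)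
  unfold gkSt3 gkS3
  generalize √t * √(1 - t/4) = a at ha ⊢
  field_simp
  linear_combination 144 * (2 + t) ^ 2 * ha

lemma gk_blowup_relation_three (ht0 : 0 < t) (ht2 : t < 2) :
    (gkYt3 t / gkY3 t) ^ ((3:ℝ)/2) + (gkYt3 t / gkY3 t) ^ (-(3:ℝ)/2) + 2
      = (gkSt3 t - gkS3 t)^2 / (2 * ((1/2)*t*(1 - t/2))) := by
  have hr : 0 < 1 - t/2 := by linarith
  have h2t : 2 - t ≠ 0 := by linarith
  have key := rpow_div_add_rpow_neg_div_of_mul_eq_sq (gkYt3_pos ht0.le ht2) hr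
    (gkYt3_mul_gkY3 ht0.le (by linarith)) 3
  push_cast at key
  rw [key, gkSt3_sub_gkS3_sq ht0.le ht2]
  have ha := sq_sqrt_mul_sqrt ht0.le (by linarith : 0 ≤ 1 - t/4)
  unfold gkYt3 gkY3
  generalize √t * √(1 - t/4) = a at ha ⊢
  field_simp
  linear_combination 24 * ha

end

/-- for `0 < t < 2`, with `Y_{1,s} = Ỹ_s/Y_s`,
`S_{1,s} = S̃_s − S_s`, `Q₁(t) = (1/2)t(1+t/2)`, `Q₂(t) = t/2`,
`Q₃(t) = (1/2)t(1−t/2)`, the blowup-equation identity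
`Y_{1,s}^{s/2} + Y_{1,s}^{−s/2} + 2 = S_{1,s}²/(2Q_s)` holds for
`s = 1, 2, 3` (real powers of positive reals). -/
theorem stmt_16 (t : ℝ) (ht0 : 0 < t) (ht2 : t < 2) :
    (gkYt1 t / gkY1 t) ^ ((1:ℝ)/2) + (gkYt1 t / gkY1 t) ^ (-(1:ℝ)/2) + 2
      = (gkSt1 t - gkS1 t)^2 / (2 * ((1/2)*t*(1 + t/2))) ∧
    (gkYt2 t / gkY2 t) + (gkYt2 t / gkY2 t)⁻¹ + 2
      = (gkSt2 t - gkS2 t)^2 / (2 * (t/2)) ∧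
    (gkYt3 t / gkY3 t) ^ ((3:ℝ)/2) + (gkYt3 t / gkY3 t) ^ (-(3:ℝ)/2) + 2
      = (gkSt3 t - gkS3 t)^2 / (2 * ((1/2)*t*(1 - t/2))) :=
  ⟨gk_blowup_relation_one ht0, gk_blowup_relation_two ht0, gk_blowup_relation_three ht0 ht2⟩
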